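/- Let Λ ⊆ G be a Meyer set and 𝒜 = (A_n) a van Hove sequence. Then the measure δ_Λ is mean almost periodic with respect to 𝒜 if and only if for each ε > 0 the set {t ∈ G : limsup_n #((Λ Δ (t+Λ)) ∩ A_n)/|A_n| < ε} is relatively dense in G, where Δ denotes the symmetric difference of sets. -/

import Mathlib

open MeasureTheory Filter Topology
open scoped ENNReal Pointwise

noncomputable section

namespace MAP

section Defs

variable {G : Type*} [MeasurableSpace G] [TopologicalSpace G] [AddCommGroup G]

/-- The `K`-boundary `∂^K A` of a set `A`. -/
def kBoundary (K A : Set G) : Set G :=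
  (closure (A + K) \ A) ∪ ((Aᶜ - K) ∩ closure A)

/-- A van Hove sequence: nonempty relatively compact open sets whose `K`-boundaries
become negligible compared to their volume. -/
structure IsVanHove (θ : Measure G) (A : ℕ → Set G) : Prop where
  isOpen : ∀ n, IsOpen (A n)
  nonempty : ∀ n, (A n).Nonempty
  relCompact : ∀ n, IsCompact (closure (A n))
  boundary : ∀ K : Set G, IsCompact K →
    Tendsto (fun n => θ (kBoundary K (A n)) / θ (A n)) atTop (𝓝 0)

/-- `(1/θ(A)) ∫_A |f|^p`, valued in `ℝ≥0∞`. -/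
def lpAvg (θ : Measure G) (A : Set G) (p : ℝ) (f : G → ℂ) : ℝ≥0∞ :=
  (∫⁻ t in A, ENNReal.ofReal (‖f t‖ ^ p) ∂θ) / θ A

/-- The Besicovitch seminorm `‖f‖_{b,p,𝒜}`. -/
def besSN (θ : Measure G) (A : ℕ → Set G) (p : ℝ) (f : G → ℂ) : ℝ≥0∞ :=
  (limsup (fun n => lpAvg θ (A n) p f) atTop) ^ (1 / p)

/-- The Weyl seminorm `‖f‖_{w,p,𝒜}`. -/
def weylSN (θ : Measure G) (A : ℕ → Set G) (p : ℝ) (f : G → ℂ) : ℝ≥0∞ :=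
  (limsup (fun n => ⨆ x : G, lpAvg θ (x +ᵥ A n) p f) atTop) ^ (1 / p)

/-- Membership in `L^p_loc`. -/
def MemLpLoc (θ : Measure G) (p : ℝ) (f : G → ℂ) : Prop :=
  AEStronglyMeasurable f θ ∧
    ∀ K : Set G, IsCompact K → (∫⁻ t in K, ENNReal.ofReal (‖f t‖ ^ p) ∂θ) < ⊤

/-- A relatively dense subset of `G`. -/
def RelDense (S : Set G) : Prop :=
  ∃ K : Set G, IsCompact K ∧ ∀ g : G, ∃ t ∈ S, g - t ∈ K

/-- Mean almost periodicity of a function with respect to a van Hove sequence. -/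
def MeanAP (θ : Measure G) (A : ℕ → Set G) (f : G → ℂ) : Prop :=
  ∀ ε : ℝ, 0 < ε →
    RelDense {t : G | besSN θ A 1 (fun s => f s - f (s - t)) < ENNReal.ofReal ε}

/-- `C_c(G)`: continuous compactly supported functions. -/
def IsCc (φ : G → ℂ) : Prop := Continuous φ ∧ HasCompactSupport φ

/-- `(1/θ(A)) ∫_A f`, valued in `ℂ`. -/
def cAvg (θ : Measure G) (A : Set G) (f : G → ℂ) : ℂ :=
  (∫ t in A, f t ∂θ) / ((θ A).toReal : ℂ)

/-- `(1/θ(A)) ∫_{s+A} f`, valued in `ℂ`. -/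
def shiftAvg (θ : Measure G) (A : Set G) (s : G) (f : G → ℂ) : ℂ :=
  (∫ t in s +ᵥ A, f t ∂θ) / ((θ A).toReal : ℂ)

/-- `(1/θ(A)) ∫_{s+A} f` for a real-valued `f`. -/
def shiftAvgR (θ : Measure G) (A : Set G) (s : G) (f : G → ℝ) : ℝ :=
  (∫ t in s +ᵥ A, f t ∂θ) / (θ A).toReal

/-- The mean `M_𝒜(f)` exists and equals `c`. -/
def MeanTendsto (θ : Measure G) (A : ℕ → Set G) (f : G → ℂ) (c : ℂ) : Prop :=
  Tendsto (fun n => cAvg θ (A n) f) atTop (𝓝 c)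

/-- The Dirac comb of a point set. -/
def diracComb (Λ : Set G) : Measure G := Measure.sum fun x : Λ => Measure.dirac (x : G)

/-- Convolution `(μ * φ)(t) = ∫ φ(t - s) dμ(s)` of a positive measure with a function. -/
def convM (μ : Measure G) (φ : G → ℂ) : G → ℂ := fun t => ∫ s, φ (t - s) ∂μ

/-- Uniform discreteness of a point set. -/
def UnifDiscrete (Λ : Set G) : Prop :=
  ∃ U : Set G, IsOpen U ∧ (0 : G) ∈ U ∧
    ∀ x ∈ Λ, ∀ y ∈ Λ, x ≠ y → (x +ᵥ U) ∩ (y +ᵥ U) = ∅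

/-- Delone sets: uniformly discrete and relatively dense. -/
def IsDelone (Λ : Set G) : Prop := UnifDiscrete Λ ∧ RelDense Λ

end Defs

section CharDefs

variable (G : Type*) [TopologicalSpace G] [AddCommGroup G]

/-- The set of continuous characters of `G`, inside `C(G, ℂ)`. -/
def CharSet : Set C(G, ℂ) :=
  {χ | (∀ x, ‖χ x‖ = 1) ∧ ∀ x y, χ (x + y) = χ x * χ y}

/-- The dual group `Ĝ` of continuous characters, with the compact-open topology. -/
abbrev Char : Type _ := ↥(CharSet G)

instance : MeasurableSpace (Char G) := borel _

instance : BorelSpace (Char G) := ⟨rfl⟩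

end CharDefs

section CharUse

variable {G : Type*} [MeasurableSpace G] [TopologicalSpace G] [AddCommGroup G]

/-- Trigonometric polynomials: finite linear combinations of characters. -/
def IsTrigPoly (P : G → ℂ) : Prop :=
  ∃ (n : ℕ) (c : Fin n → ℂ) (χ : Fin n → Char G),
    P = fun x => ∑ i, c i * ((χ i : C(G, ℂ)) x)

/-- Besicovitch `p`-almost periodicity of a function. -/
def BapMem (θ : Measure G) (A : ℕ → Set G) (p : ℝ) (f : G → ℂ) : Prop :=
  MemLpLoc θ p f ∧ ∀ ε : ℝ, 0 < ε →
    ∃ P : G → ℂ, IsTrigPoly P ∧ besSN θ A p (fun x => f x - P x) < ENNReal.ofReal ε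

/-- Weyl `p`-almost periodicity of a function. -/
def WapMem (θ : Measure G) (A : ℕ → Set G) (p : ℝ) (f : G → ℂ) : Prop :=
  MemLpLoc θ p f ∧ ∀ ε : ℝ, 0 < ε →
    ∃ P : G → ℂ, IsTrigPoly P ∧ weylSN θ A p (fun x => f x - P x) < ENNReal.ofReal ε

/-- The Fourier–Bohr coefficient of `f` at `χ` along `A` exists and equals `a`. -/
def FBTendsto (θ : Measure G) (A : ℕ → Set G) (f : G → ℂ) (χ : Char G) (a : ℂ) : Prop :=
  MeanTendsto θ A (fun t => (starRingEnd ℂ) ((χ : C(G, ℂ)) t) * f t) a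

/-- `φ̌(χ) = ∫ χ(t) φ(t) dt`. -/
def checkFn (θ : Measure G) (φ : G → ℂ) (χ : Char G) : ℂ :=
  ∫ t, (χ : C(G, ℂ)) t * φ t ∂θ

/-- `(φ * ψ̃)(x) = ∫ φ(x - y) conj(ψ(-y)) dy`. -/
def tildeConv (θ : Measure G) (φ ψ : G → ℂ) : G → ℂ :=
  fun x => ∫ y, φ (x - y) * (starRingEnd ℂ) (ψ (-y)) ∂θ

/-- A pure point measure. -/
def PurePointM {X : Type*} [MeasurableSpace X] (σ : Measure X) : Prop :=
  ∀ B : Set X, MeasurableSet B → σ B = ∑' x : B, σ {(x : X)}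

end CharUse

section TB

variable (Γ : Type*) [MeasurableSpace Γ] [TopologicalSpace Γ] [AddCommGroup Γ]

/-- A translation bounded complex (Radon) measure, given by its total variation
measure together with a unimodular density (polar decomposition). -/
structure TBMeasure where
  tv : Measure Γ
  dens : Γ → ℂ
  dens_meas : Measurable dens
  dens_norm : ∀ x, ‖dens x‖ = 1
  bounded : ∀ K : Set Γ, IsCompact K → ∃ C : ℝ≥0∞, C ≠ ⊤ ∧ ∀ t : Γ, tv (t +ᵥ K) ≤ C

end TB

section TBUse

variable {G : Type*} [MeasurableSpace G] [TopologicalSpace G] [AddCommGroup G]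

/-- `∫ f dμ` for a translation bounded complex measure. -/
def TBMeasure.integral (μ : TBMeasure G) (f : G → ℂ) : ℂ := ∫ x, f x * μ.dens x ∂μ.tv

/-- `(μ * φ)(t) = ∫ φ(t - s) dμ(s)`. -/
def TBMeasure.conv (μ : TBMeasure G) (φ : G → ℂ) : G → ℂ :=
  fun t => ∫ s, φ (t - s) * μ.dens s ∂μ.tv

/-- `(1/θ(A_n)) · (μ|_{A_n} * ν̃|_{-A_n})(φ)`, the `n`-th Eberlein pairing of `μ` with `ν̃`. -/
def ebPair (θ : Measure G) (A : ℕ → Set G) (μ ν : TBMeasure G) (φ : G → ℂ) (n : ℕ) : ℂ :=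
  (∫ s in A n, ∫ u in A n, φ (s - u) * μ.dens s * (starRingEnd ℂ) (ν.dens u) ∂ν.tv ∂μ.tv) /
    ((θ (A n)).toReal : ℂ)

/-- Fourier–Bohr coefficient of a translation bounded measure along `A`. -/
def FBTendstoM (θ : Measure G) (A : ℕ → Set G) (μ : TBMeasure G) (χ : Char G) (a : ℂ) : Prop :=
  Tendsto (fun n =>
      (∫ t in A n, (starRingEnd ℂ) ((χ : C(G, ℂ)) t) * μ.dens t ∂μ.tv) /
        ((θ (A n)).toReal : ℂ))
    atTop (𝓝 a)

/-- `σ` is the Fourier transform of the positive definite measure `γ`: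
`∫_{Ĝ} |φ̌|² dσ = ∫_G (φ * φ̃) dγ` for all `φ ∈ C_c(G)`. -/
def IsFTOf (θ : Measure G) (γ : TBMeasure G) (σ : Measure (Char G)) : Prop :=
  ∀ φ : G → ℂ, IsCc φ → ∃ r : ℝ, 0 ≤ r ∧
    γ.integral (tildeConv θ φ φ) = (r : ℂ) ∧
    (∫⁻ χ, ENNReal.ofReal (‖checkFn θ φ χ‖ ^ 2) ∂σ) = ENNReal.ofReal r

end TBUse

section UniformDefs

variable {H : Type*} [UniformSpace H]

/-- `C_u(G)`: bounded uniformly continuous functions. -/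
def CuFun (f : H → ℂ) : Prop := UniformContinuous f ∧ ∃ C : ℝ, ∀ x, ‖f x‖ ≤ C

/-- Bohr (strong) almost periodicity. -/
def BohrAP [AddCommGroup H] (f : H → ℂ) : Prop :=
  CuFun f ∧ ∀ ε : ℝ, 0 < ε → RelDense {t : H | ∀ x, ‖f x - f (x - t)‖ ≤ ε}

end UniformDefs

end MAP

open MAP

/-!
Write `f = δ_Λ * φ` and `D_t = Λ ∆ (t + Λ)`. As `f - f(· - t) = (δ_Λ - δ_{t+Λ}) * φ`, we get
`∫_{A_n} |f - f(· - t)| ≤ ‖φ‖₁ · #(D_t ∩ (A_n - supp φ))`, and the points of `D_t` near the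
boundary of `A_n` are negligible by the van Hove property. So every `t` for which `D_t` has small
upper density is an almost period of `f`.

Conversely, the Meyer property gives a neighbourhood `V` of `0` such that `Λ - Λ` is
`(V - V) - (V - V)`-separated; take `φ` supported in `V` and equal to `1` on a neighbourhood `U`
of `0`. Every `t` is `(V - V)`-close to at most one `t' ∈ Λ - Λ` (put `t' = t` if there is none).
Then `|f - f(· - t)| = 1` on the disjoint translates `x + U`, both for `x ∈ Λ \ (t' + Λ)` and for
`x ∈ (t - t') + ((t' + Λ) \ Λ)`, whence `|U| · dens D_{t'} ≤ 2 ‖f - f(· - t)‖_{b,1}`. An almost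
period `t` of `f` thus yields a `t'` in the compact set `t - (cl V - cl V)` with `D_{t'}` sparse.
-/

open scoped symmDiff

namespace MAP

section Separation

variable {G : Type*} [AddCommGroup G]

def IsSeparatedBy (N S : Set G) : Prop :=
  ∀ x ∈ S, ∀ y ∈ S, x - y ∈ N → x = y

theorem IsSeparatedBy.mono {N N' S S' : Set G} (h : IsSeparatedBy N S) (hN : N' ⊆ N)
    (hS : S' ⊆ S) : IsSeparatedBy N' S' :=
  fun x hx y hy hxy => h x (hS hx) y (hS hy) (hN hxy)

theorem IsSeparatedBy.vadd {N S : Set G} (h : IsSeparatedBy N S) (t : G) :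
    IsSeparatedBy N (t +ᵥ S) := by
  rintro _ ⟨x, hx, rfl⟩ _ ⟨y, hy, rfl⟩ hxy
  rw [h x hx y hy (by simpa [vadd_eq_add] using hxy)]

theorem IsSeparatedBy.pairwiseDisjoint_vadd {U S : Set G} (h : IsSeparatedBy (U - U) S) :
    S.PairwiseDisjoint (· +ᵥ U) := by
  refine fun x hx y hy hxy => Set.disjoint_left.2 ?_
  rintro _ ⟨u, hu, rfl⟩ ⟨v, hv, huv⟩
  refine hxy (h x hx y hy ⟨v, hv, u, hu, ?_⟩)
  simp only [vadd_eq_add] at huv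
  rw [sub_eq_sub_iff_add_eq_add, add_comm v, huv]

theorem IsSeparatedBy.sub_of_sub_sub {N Λ : Set G} (h : IsSeparatedBy N (Λ - Λ - Λ)) :
    IsSeparatedBy N (Λ - Λ) := by
  rintro _ ⟨a, ha, b, hb, rfl⟩ _ ⟨c, hc, d, hd, rfl⟩ hN
  beta_reduce at hN ⊢
  -- `(a - b) - (c - d)` is the difference of `a - b - c` and `d - d - d`, both in `Λ - Λ - Λ`
  have key := h (a - b - c) (Set.sub_mem_sub (Set.sub_mem_sub ha hb) hc) (d - d - d)
    (Set.sub_mem_sub (Set.sub_mem_sub hd hd) hd) (by convert hN using 1; abel)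
  rw [← sub_eq_zero] at key ⊢
  rw [← key]
  abel

theorem IsSeparatedBy.of_sub {N Λ : Set G} (h : IsSeparatedBy N (Λ - Λ)) : IsSeparatedBy N Λ :=
  fun x hx y hy hxy => sub_eq_zero.1 <|
    (h _ (Set.sub_mem_sub hx hy) _ (Set.sub_mem_sub hx hx) (by simpa using hxy)).trans (sub_self x)

/-- `t'` is the point of `D` that is `N`-close to `t` if there is one, and `t` otherwise. -/
theorem IsSeparatedBy.exists_unique_near {N D : Set G} (h : IsSeparatedBy (N - N) D)
    (h0 : (0 : G) ∈ N) (t : G) : ∃ t', t - t' ∈ N ∧ ∀ d ∈ D, t - d ∈ N → d = t' := by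
  by_cases hd : ∃ d ∈ D, t - d ∈ N
  · obtain ⟨d, hd, htd⟩ := hd
    exact ⟨d, htd, fun d' hd' htd' =>
      h d' hd' d hd ⟨t - d, htd, t - d', htd', sub_sub_sub_cancel_left d d' t⟩⟩
  · push Not at hd
    exact ⟨t, by simpa using h0, fun d hd' htd => absurd htd (hd d hd')⟩

end Separation

section Topology

variable {G : Type*} [AddCommGroup G] [TopologicalSpace G]

theorem unifDiscrete_iff {S : Set G} :
    UnifDiscrete S ↔ ∃ U, IsOpen U ∧ (0 : G) ∈ U ∧ IsSeparatedBy (U - U) S := by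
  constructor
  · rintro ⟨U, hUo, hU0, hdisj⟩
    refine ⟨U, hUo, hU0, fun x hx y hy hxy => ?_⟩
    by_contra hne
    obtain ⟨u, hu, v, hv, huv⟩ := hxy
    have hmem : x + v ∈ (x +ᵥ U) ∩ (y +ᵥ U) :=
      ⟨⟨v, hv, rfl⟩, ⟨u, hu, show y + u = x + v by
        rw [add_comm]; exact sub_eq_sub_iff_add_eq_add.1 huv⟩⟩
    rw [hdisj x hx y hy hne] at hmem
    exact hmem
  · rintro ⟨U, hUo, hU0, hsep⟩
    exact ⟨U, hUo, hU0, fun x hx y hy hxy =>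
      Set.disjoint_iff_inter_eq_empty.1 (hsep.pairwiseDisjoint_vadd hx hy hxy)⟩

theorem UnifDiscrete.mono {S T : Set G} (hT : UnifDiscrete T) (h : S ⊆ T) : UnifDiscrete S := by
  obtain ⟨U, hUo, hU0, hsep⟩ := unifDiscrete_iff.1 hT
  exact unifDiscrete_iff.2 ⟨U, hUo, hU0, hsep.mono subset_rfl h⟩

theorem UnifDiscrete.vadd {S : Set G} (hS : UnifDiscrete S) (t : G) : UnifDiscrete (t +ᵥ S) := by
  obtain ⟨U, hUo, hU0, hsep⟩ := unifDiscrete_iff.1 hS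
  exact unifDiscrete_iff.2 ⟨U, hUo, hU0, hsep.vadd t⟩

theorem UnifDiscrete.of_sub_sub {Λ : Set G} (h : UnifDiscrete (Λ - Λ - Λ)) : UnifDiscrete Λ := by
  obtain ⟨U, hUo, hU0, hsep⟩ := unifDiscrete_iff.1 h
  exact unifDiscrete_iff.2 ⟨U, hUo, hU0, hsep.sub_of_sub_sub.of_sub⟩

theorem kBoundary_mono {K K' : Set G} (A : Set G) (h : K ⊆ K') :
    kBoundary K A ⊆ kBoundary K' A :=
  Set.union_subset_union (Set.sdiff_subset_sdiff_left (closure_mono (Set.add_subset_add_left h)))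
    (Set.inter_subset_inter_left _ (Set.sub_subset_sub_left h))

theorem add_subset_union_kBoundary (A K : Set G) : A + K ⊆ A ∪ kBoundary K A := fun z hz =>
  (em (z ∈ A)).imp id fun hzA => Or.inl ⟨subset_closure hz, hzA⟩

theorem mem_kBoundary_of_not_vadd_subset {A K : Set G} {x : G} (hx : x ∈ A)
    (h : ¬x +ᵥ K ⊆ A) : x ∈ kBoundary K A := by
  obtain ⟨_, ⟨k, hk, rfl⟩, hxk⟩ := Set.not_subset.1 h
  exact Or.inr ⟨⟨x +ᵥ k, hxk, k, hk, add_sub_cancel_right x k⟩, subset_closure hx⟩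

theorem RelDense.mono {S T : Set G} (hS : RelDense S) (h : S ⊆ T) : RelDense T := by
  obtain ⟨K, hK, hSK⟩ := hS
  exact ⟨K, hK, fun g => (hSK g).imp fun t ht => ⟨h ht.1, ht.2⟩⟩

variable [IsTopologicalAddGroup G]

theorem UnifDiscrete.finite_inter {S B : Set G} (hS : UnifDiscrete S) (hB : IsCompact B) :
    (S ∩ B).Finite := by
  obtain ⟨U, hUo, hU0, hsep⟩ := unifDiscrete_iff.1 hS
  obtain ⟨F, -, hcov⟩ := hB.elim_nhds_subcover (fun b => b +ᵥ U)
    (fun b _ => (hUo.vadd b).mem_nhds ⟨0, hU0, add_zero b⟩)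
  refine (F.finite_toSet.biUnion (t := fun b => S ∩ (b +ᵥ U)) fun b _ => ?_).subset
    fun x hx => ?_
  · refine Set.Subsingleton.finite fun x hx y hy => hsep x hx.1 y hy.1 ?_
    obtain ⟨u, hu, rfl⟩ := hx.2
    obtain ⟨v, hv, rfl⟩ := hy.2
    exact ⟨u, hu, v, hv, by simp only [vadd_eq_add]; abel⟩
  · obtain ⟨b, hb, hxb⟩ := Set.mem_iUnion₂.1 (hcov hx.2)
    exact Set.mem_iUnion₂.2 ⟨b, hb, hx.1, hxb⟩

theorem UnifDiscrete.finite_inter_symmDiff_vadd {Λ C : Set G} (hΛ : UnifDiscrete Λ) (t : G)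
    (hC : IsCompact C) : ((Λ ∆ (t +ᵥ Λ)) ∩ C).Finite := by
  refine ((hΛ.finite_inter hC).union ((hΛ.vadd t).finite_inter hC)).subset ?_
  rw [← Set.union_inter_distrib_right]
  exact Set.inter_subset_inter_left C Set.symmDiff_subset_union

theorem UnifDiscrete.hasFiniteSupport_indicator_sub {E : Type*} [Zero E] {Λ : Set G}
    {ψ : G → E} (hΛ : UnifDiscrete Λ) (hψ : HasCompactSupport ψ) (s : G) :
    Function.HasFiniteSupport (Λ.indicator fun x => ψ (s - x)) := by
  rw [Function.HasFiniteSupport, Set.support_indicator]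
  exact (hΛ.finite_inter ((Homeomorph.subLeft s).isCompact_preimage.2 hψ)).subset
    (Set.inter_subset_inter_right _ fun x hx => subset_tsupport ψ hx)

theorem kBoundary_add_subset (A K V : Set G) :
    kBoundary K A + V ⊆ kBoundary (insert 0 K + (closure V ∪ -closure V)) A := by
  set L := insert 0 K + (closure V ∪ -closure V)
  have hL : ∀ k ∈ insert 0 K, ∀ w ∈ V, k + w ∈ L ∧ k - w ∈ L := fun k hk w hw =>
    ⟨⟨k, hk, w, Or.inl (subset_closure hw), rfl⟩,
      ⟨k, hk, -w, Or.inr (by simpa using subset_closure hw), (sub_eq_add_neg k w).symm⟩⟩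
  have hshift : ∀ {B : Set G} {x w : G}, x ∈ closure B → w ∈ V → (∀ b ∈ B, b + w ∈ A + L) →
      x + w ∈ closure (A + L) := fun {B x w} hx hw hB => by
    have : x + w ∈ w +ᵥ closure B := ⟨x, hx, add_comm w x⟩
    rw [← closure_vadd] at this
    refine closure_mono ?_ this
    rintro _ ⟨b, hb, rfl⟩
    show w + b ∈ A + L
    rw [add_comm w b]
    exact hB b hb
  rintro _ ⟨x, hx, w, hw, rfl⟩
  by_cases hxw : x + w ∈ A
  · refine Or.inr ⟨?_, subset_closure hxw⟩
    rcases hx with ⟨-, hxA⟩ | ⟨⟨a, ha, k, hk, rfl⟩, -⟩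
    · exact ⟨x, hxA, 0 - w, (hL 0 (Set.mem_insert 0 K) w hw).2, by beta_reduce; abel⟩
    · exact ⟨a, ha, k - w, (hL k (Set.mem_insert_of_mem 0 hk) w hw).2, by beta_reduce; abel⟩
  · refine Or.inl ⟨?_, hxw⟩
    rcases hx with ⟨hx, -⟩ | ⟨-, hx⟩
    · refine hshift hx hw ?_
      rintro _ ⟨a, ha, k, hk, rfl⟩
      exact ⟨a, ha, k + w, (hL k (Set.mem_insert_of_mem 0 hk) w hw).1, (add_assoc a k w).symm⟩
    · exact hshift hx hw fun a ha =>
        ⟨a, ha, 0 + w, (hL 0 (Set.mem_insert 0 K) w hw).1, by beta_reduce; abel⟩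

theorem isCompact_kBoundary_subset {A K : Set G} (hA : IsCompact (closure A))
    (hK : IsCompact K) : ∃ C, IsCompact C ∧ kBoundary K A ⊆ C :=
  ⟨closure (A + K) ∪ closure A,
    ((hA.add hK).closure_of_subset (Set.add_subset_add_right subset_closure)).union hA,
    Set.union_subset_union Set.sdiff_subset Set.inter_subset_right⟩

theorem RelDense.of_forall_exists_sub_mem {S T N : Set G} (hS : RelDense S) (hN : IsCompact N)
    (h : ∀ t ∈ S, ∃ t' ∈ T, t - t' ∈ N) : RelDense T := by
  obtain ⟨K, hK, hSK⟩ := hS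
  refine ⟨K + N, hK.add hN, fun g => ?_⟩
  obtain ⟨t, ht, hgt⟩ := hSK g
  obtain ⟨t', ht', htt'⟩ := h t ht
  exact ⟨t', ht', g - t, hgt, t - t', htt', sub_add_sub_cancel g t t'⟩

variable [LocallyCompactSpace G]

theorem exists_isOpen_isCompact_closure_subset {W : Set G} (hW : W ∈ 𝓝 (0 : G)) :
    ∃ V, IsOpen V ∧ (0 : G) ∈ V ∧ IsCompact (closure V) ∧ V ⊆ W := by
  obtain ⟨V, hVo, hV0, hVW, hVc⟩ := exists_open_between_and_isCompact_closure isCompact_singleton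
    isOpen_interior (Set.singleton_subset_iff.2 (mem_interior_iff_mem_nhds.2 hW))
  exact ⟨V, hVo, hV0 rfl, hVc, subset_closure.trans (hVW.trans interior_subset)⟩

theorem UnifDiscrete.exists_isSeparatedBy {S : Set G} (hS : UnifDiscrete S) :
    ∃ U, IsOpen U ∧ (0 : G) ∈ U ∧ IsCompact (closure U) ∧ IsSeparatedBy (U - U) S := by
  obtain ⟨U, hUo, hU0, hsep⟩ := unifDiscrete_iff.1 hS
  obtain ⟨V, hVo, hV0, hVc, hVU⟩ := exists_isOpen_isCompact_closure_subset (hUo.mem_nhds hU0)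
  exact ⟨V, hVo, hV0, hVc, hsep.mono (Set.sub_subset_sub hVU hVU) subset_rfl⟩

theorem exists_sub_sub_sub_subset {W : Set G} (hW : W ∈ 𝓝 (0 : G)) :
    ∃ V, IsOpen V ∧ (0 : G) ∈ V ∧ IsCompact (closure V) ∧ (V - V) - (V - V) ⊆ W := by
  obtain ⟨V₀, hV₀, hquarter⟩ := exists_nhds_zero_quarter hW
  obtain ⟨V, hVo, hV0, hVc, hV⟩ :=
    exists_isOpen_isCompact_closure_subset (inter_mem hV₀ (neg_mem_nhds_zero G hV₀))
  refine ⟨V, hVo, hV0, hVc, ?_⟩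
  rintro _ ⟨_, ⟨a, ha, b, hb, rfl⟩, _, ⟨c, hc, d, hd, rfl⟩, rfl⟩
  convert hquarter (hV ha).1 (hV hb).2 (hV hc).2 (hV hd).1 using 1
  beta_reduce
  abel

theorem exists_isCc_eq_one_near_zero {V : Set G} (hVo : IsOpen V) (hV0 : (0 : G) ∈ V)
    (hVc : IsCompact (closure V)) :
    ∃ (φ : G → ℂ) (U : Set G), IsCc φ ∧ (∀ z, φ z ≠ 0 → z ∈ V) ∧
      IsOpen U ∧ (0 : G) ∈ U ∧ U ⊆ V ∧ ∀ z ∈ U, φ z = 1 := by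
  obtain ⟨U, hUo, hU0, hUV, -⟩ := exists_open_between_and_isCompact_closure isCompact_singleton
    hVo (Set.singleton_subset_iff.2 hV0)
  obtain ⟨f, hfV, hf1, -⟩ := exists_tsupport_one_of_isOpen_isClosed hVo hVc isClosed_closure hUV
  refine ⟨fun z => (f z : ℂ), U, ⟨by fun_prop, ?_⟩, fun z hz => hfV (subset_tsupport _ ?_),
    hUo, hU0 rfl, subset_closure.trans hUV, fun z hz => ?_⟩
  · exact HasCompactSupport.comp_left (g := Complex.ofReal)
      (hVc.of_isClosed_subset (isClosed_tsupport f) (hfV.trans subset_closure)) Complex.ofReal_zero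
  · simpa using hz
  · simp [hf1 (subset_closure hz)]

end Topology

theorem ENNReal.limsup_add_le_atTop (u v : ℕ → ℝ≥0∞) :
    limsup (fun n => u n + v n) atTop ≤ limsup u atTop + limsup v atTop := by
  refine ENNReal.le_of_forall_pos_le_add fun ε hε hfin => ?_
  have hε2 : (ε / 2 : ℝ≥0∞) ≠ 0 := by simpa using hε.ne'
  have hu := eventually_lt_of_limsup_lt
    (ENNReal.lt_add_right (ENNReal.add_lt_top.1 hfin).1.ne hε2)
  have hv := eventually_lt_of_limsup_lt
    (ENNReal.lt_add_right (ENNReal.add_lt_top.1 hfin).2.ne hε2)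
  refine limsup_le_of_le (by isBoundedDefault) ?_
  filter_upwards [hu, hv] with n hun hvn
  calc u n + v n ≤ limsup u atTop + ε / 2 + (limsup v atTop + ε / 2) :=
        add_le_add hun.le hvn.le
    _ = limsup u atTop + limsup v atTop + ε := by rw [add_add_add_comm, ENNReal.add_halves]

theorem ENNReal.exists_mul_ofReal_lt {C : ℝ≥0∞} (hC : C ≠ ⊤) {ε : ℝ} (hε : 0 < ε) :
    ∃ δ : ℝ, 0 < δ ∧ C * ENNReal.ofReal δ < ENNReal.ofReal ε := by
  have hC' : 0 ≤ C.toReal := ENNReal.toReal_nonneg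
  refine ⟨ε / (C.toReal + 1), by positivity, ?_⟩
  calc C * ENNReal.ofReal (ε / (C.toReal + 1))
      = ENNReal.ofReal (C.toReal * (ε / (C.toReal + 1))) := by
        rw [ENNReal.ofReal_mul hC', ENNReal.ofReal_toReal hC]
    _ < ENNReal.ofReal ε := (ENNReal.ofReal_lt_ofReal_iff hε).2 <| by
        rw [mul_div_assoc', div_lt_iff₀ (by positivity)]
        nlinarith

section Density

variable {G : Type*} [MeasurableSpace G] {θ : Measure G} {A : ℕ → Set G}

def upperDensity (θ : Measure G) (A : ℕ → Set G) (S : Set G) : ℝ≥0∞ :=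
  limsup (fun n => ((S ∩ A n).ncard : ℝ≥0∞) / θ (A n)) atTop

theorem upperDensity_union_le (S T : Set G) :
    upperDensity θ A (S ∪ T) ≤ upperDensity θ A S + upperDensity θ A T := by
  refine (limsup_le_limsup (Eventually.of_forall fun n => ?_)).trans
    (ENNReal.limsup_add_le_atTop _ _)
  rw [← ENNReal.add_div, Set.union_inter_distrib_right]
  gcongr
  exact_mod_cast Set.ncard_union_le _ _

theorem besSN_one_eq (θ : Measure G) (A : ℕ → Set G) (f : G → ℂ) :
    besSN θ A 1 f = limsup (fun n => (∫⁻ s in A n, ‖f s‖ₑ ∂θ) / θ (A n)) atTop := by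
  simp [besSN, lpAvg, ofReal_norm]

variable [AddCommGroup G] [TopologicalSpace G] [IsTopologicalAddGroup G]

theorem UnifDiscrete.finite_inter_vanHove {S : Set G} (hS : UnifDiscrete S)
    (hA : IsVanHove θ A) (n : ℕ) : (S ∩ A n).Finite :=
  (hS.finite_inter (hA.relCompact n)).subset (Set.inter_subset_inter_right S subset_closure)

theorem UnifDiscrete.finite_inter_kBoundary {S K : Set G} (hS : UnifDiscrete S)
    (hA : IsVanHove θ A) (hK : IsCompact K) (n : ℕ) : (S ∩ kBoundary K (A n)).Finite := by
  obtain ⟨C, hC, hKC⟩ := isCompact_kBoundary_subset (hA.relCompact n) hK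
  exact (hS.finite_inter hC).subset (Set.inter_subset_inter_right S hKC)

variable [BorelSpace G] [θ.IsAddHaarMeasure]

variable (θ) in
theorem ncard_mul_measure_le {F U B : Set G} (hF : F.Finite) (hU : MeasurableSet U)
    (hdisj : F.PairwiseDisjoint (· +ᵥ U)) (hB : F + U ⊆ B) : (F.ncard : ℝ≥0∞) * θ U ≤ θ B :=
  calc (F.ncard : ℝ≥0∞) * θ U = ∑ x ∈ hF.toFinset, θ (x +ᵥ U) := by
        simp [measure_vadd, Set.ncard_eq_toFinset_card _ hF]
    _ = θ (⋃ x ∈ hF.toFinset, x +ᵥ U) :=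
        (measure_biUnion_finset (by simpa using hdisj) fun x _ => hU.const_vadd x).symm
    _ ≤ θ B := measure_mono fun z hz => hB <| by
        obtain ⟨x, hx, u, hu, rfl⟩ := Set.mem_iUnion₂.1 hz
        exact Set.add_mem_add (hF.mem_toFinset.1 hx) hu

/-- Points of `S ∩ B` whose `U`-neighbourhood leaves `B` lie on the boundary; the others
contribute disjoint copies of `U` on which `g ≥ 1`. -/
theorem measure_mul_ncard_le {B U S : Set G} {g : G → ℝ≥0∞} (hUo : IsOpen U)
    (hS : IsSeparatedBy (U - U) S) (hfin : (S ∩ B).Finite)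
    (hfin' : (S ∩ kBoundary (closure U) B).Finite) (hg : ∀ x ∈ S, ∀ w ∈ U, 1 ≤ g (x + w)) :
    θ U * (S ∩ B).ncard ≤ ∫⁻ s in B, g s ∂θ + θ U * (S ∩ kBoundary (closure U) B).ncard := by
  set F := {x ∈ S ∩ B | x +ᵥ closure U ⊆ B}
  have hF : F.Finite := hfin.subset (Set.sep_subset _ _)
  have hcard : (S ∩ B).ncard ≤ F.ncard + (S ∩ kBoundary (closure U) B).ncard := by
    refine (Set.ncard_le_ncard (fun x hx => ?_) (hF.union hfin')).trans (Set.ncard_union_le _ _)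
    by_cases hxU : x +ᵥ closure U ⊆ B
    · exact Or.inl ⟨hx, hxU⟩
    · exact Or.inr ⟨hx.1, mem_kBoundary_of_not_vadd_subset hx.2 hxU⟩
  have hFU : F + U ⊆ B := by
    rintro _ ⟨x, hx, u, hu, rfl⟩
    exact hx.2 ⟨u, subset_closure hu, rfl⟩
  have hFint : θ U * F.ncard ≤ ∫⁻ s in B, g s ∂θ :=
    calc θ U * F.ncard ≤ θ (F + U) := by
          rw [mul_comm]
          exact ncard_mul_measure_le θ hF hUo.measurableSet
            ((hS.mono subset_rfl fun x hx => hx.1.1).pairwiseDisjoint_vadd) subset_rfl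
      _ = ∫⁻ _ in F + U, 1 ∂θ := (setLIntegral_one _).symm
      _ ≤ ∫⁻ s in F + U, g s ∂θ := by
          refine setLIntegral_mono' hUo.add_left.measurableSet ?_
          rintro _ ⟨x, hx, u, hu, rfl⟩
          exact hg x hx.1.1 u hu
      _ ≤ ∫⁻ s in B, g s ∂θ := lintegral_mono_set hFU
  calc θ U * (S ∩ B).ncard ≤ θ U * F.ncard + θ U * (S ∩ kBoundary (closure U) B).ncard := by
        rw [← mul_add]
        gcongr
        exact_mod_cast hcard
    _ ≤ _ := by gcongr

variable [LocallyCompactSpace G]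

theorem IsVanHove.tendsto_ncard_inter_kBoundary {S K : Set G} (hA : IsVanHove θ A)
    (hS : UnifDiscrete S) (hK : IsCompact K) :
    Tendsto (fun n => ((S ∩ kBoundary K (A n)).ncard : ℝ≥0∞) / θ (A n)) atTop (𝓝 0) := by
  obtain ⟨U, hUo, hU0, hUc, hsep⟩ := hS.exists_isSeparatedBy
  set L := insert 0 K + (closure U ∪ -closure U)
  have hL : IsCompact L := (hK.insert 0).add (hUc.union hUc.neg)
  have hUpos : θ U ≠ 0 := (hUo.measure_pos θ ⟨0, hU0⟩).ne'
  have hUtop : θ U ≠ ⊤ := (measure_mono subset_closure).trans_lt hUc.measure_lt_top |>.ne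
  have hbound : ∀ n, ((S ∩ kBoundary K (A n)).ncard : ℝ≥0∞) / θ (A n)
      ≤ (θ U)⁻¹ * (θ (kBoundary L (A n)) / θ (A n)) := fun n => by
    have hcount := ncard_mul_measure_le θ (hS.finite_inter_kBoundary hA hK n)
      hUo.measurableSet (hsep.pairwiseDisjoint_vadd.subset Set.inter_subset_left)
      ((Set.add_subset_add_right Set.inter_subset_right).trans (kBoundary_add_subset _ K U))
    rw [← ENNReal.le_div_iff_mul_le (Or.inl hUpos) (Or.inl hUtop)] at hcount
    calc ((S ∩ kBoundary K (A n)).ncard : ℝ≥0∞) / θ (A n)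
        ≤ θ (kBoundary L (A n)) / θ U / θ (A n) := by gcongr
      _ = (θ U)⁻¹ * (θ (kBoundary L (A n)) / θ (A n)) := by
        simp only [div_eq_mul_inv]; ring
  refine tendsto_of_tendsto_of_tendsto_of_le_of_le tendsto_const_nhds ?_ (fun _ => zero_le)
    hbound
  simpa using ENNReal.Tendsto.const_mul (hA.boundary L hL) (Or.inr (ENNReal.inv_ne_top.2 hUpos))

theorem IsVanHove.tendsto_ncard_symmDiff_inter_kBoundary {Λ K : Set G} (hA : IsVanHove θ A)
    (hΛ : UnifDiscrete Λ) (t : G) (hK : IsCompact K) :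
    Tendsto (fun n => (((Λ ∆ (t +ᵥ Λ)) ∩ kBoundary K (A n)).ncard : ℝ≥0∞) / θ (A n)) atTop
      (𝓝 0) := by
  have h := (hA.tendsto_ncard_inter_kBoundary hΛ hK).add
    (hA.tendsto_ncard_inter_kBoundary (hΛ.vadd t) hK)
  rw [add_zero] at h
  refine tendsto_of_tendsto_of_tendsto_of_le_of_le tendsto_const_nhds h (fun _ => zero_le)
    fun n => ?_
  have hsub : (Λ ∆ (t +ᵥ Λ)) ∩ kBoundary K (A n)
      ⊆ (Λ ∩ kBoundary K (A n)) ∪ ((t +ᵥ Λ) ∩ kBoundary K (A n)) := by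
    rw [← Set.union_inter_distrib_right]
    exact Set.inter_subset_inter_left _ Set.symmDiff_subset_union
  simp only [← ENNReal.add_div]
  gcongr
  exact_mod_cast (Set.ncard_le_ncard hsub ((hΛ.finite_inter_kBoundary hA hK n).union
    ((hΛ.vadd t).finite_inter_kBoundary hA hK n))).trans (Set.ncard_union_le _ _)

theorem IsVanHove.upperDensity_vadd_le {S : Set G} (hA : IsVanHove θ A) (hS : UnifDiscrete S)
    (v : G) : upperDensity θ A (v +ᵥ S) ≤ upperDensity θ A S := by
  have hcard : ∀ n, ((v +ᵥ S) ∩ A n).ncard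
      ≤ (S ∩ A n).ncard + (S ∩ kBoundary {-v} (A n)).ncard := fun n => by
    have hsub : -v +ᵥ A n ⊆ A n ∪ kBoundary {-v} (A n) := fun x hx =>
      add_subset_union_kBoundary _ _ <| by
        obtain ⟨a, ha, rfl⟩ := hx
        exact ⟨a, ha, -v, rfl, add_comm a (-v)⟩
    calc ((v +ᵥ S) ∩ A n).ncard = (S ∩ (-v +ᵥ A n)).ncard := by
          rw [← Set.ncard_vadd_set v (S ∩ (-v +ᵥ A n)), Set.vadd_set_inter, vadd_neg_vadd]
      _ ≤ ((S ∩ A n) ∪ (S ∩ kBoundary {-v} (A n))).ncard :=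
          Set.ncard_le_ncard (Set.inter_union_distrib_left S _ _ ▸
            Set.inter_subset_inter_right S hsub) ((hS.finite_inter_vanHove hA n).union
              (hS.finite_inter_kBoundary hA isCompact_singleton n))
      _ ≤ _ := Set.ncard_union_le _ _
  calc upperDensity θ A (v +ᵥ S)
      ≤ limsup (fun n => ((S ∩ A n).ncard : ℝ≥0∞) / θ (A n)
          + ((S ∩ kBoundary {-v} (A n)).ncard : ℝ≥0∞) / θ (A n)) atTop := by
        refine limsup_le_limsup (Eventually.of_forall fun n => ?_)
        beta_reduce
        rw [← ENNReal.add_div]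
        gcongr
        exact_mod_cast hcard n
    _ = upperDensity θ A S := ENNReal.limsup_add_of_right_tendsto_zero
        (hA.tendsto_ncard_inter_kBoundary hS isCompact_singleton) _

theorem IsVanHove.upperDensity_vadd {S : Set G} (hA : IsVanHove θ A) (hS : UnifDiscrete S)
    (v : G) : upperDensity θ A (v +ᵥ S) = upperDensity θ A S :=
  le_antisymm (hA.upperDensity_vadd_le hS v) <| by
    simpa using hA.upperDensity_vadd_le (hS.vadd v) (-v)

theorem IsVanHove.measure_mul_upperDensity_le_besSN {U S : Set G} {h : G → ℂ}
    (hA : IsVanHove θ A) (hUo : IsOpen U) (hU0 : (0 : G) ∈ U) (hUc : IsCompact (closure U))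
    (hS : IsSeparatedBy (U - U) S) (hh : ∀ x ∈ S, ∀ w ∈ U, 1 ≤ ‖h (x + w)‖ₑ) :
    θ U * upperDensity θ A S ≤ besSN θ A 1 h := by
  have hSd : UnifDiscrete S := unifDiscrete_iff.2 ⟨U, hUo, hU0, hS⟩
  have hUtop : θ U ≠ ⊤ := ((measure_mono subset_closure).trans_lt hUc.measure_lt_top).ne
  have hbound : ∀ n, θ U * (((S ∩ A n).ncard : ℝ≥0∞) / θ (A n))
      ≤ (∫⁻ s in A n, ‖h s‖ₑ ∂θ) / θ (A n)
        + θ U * (((S ∩ kBoundary (closure U) (A n)).ncard : ℝ≥0∞) / θ (A n)) := fun n => by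
    simp only [← mul_div_assoc, ← ENNReal.add_div]
    gcongr
    exact measure_mul_ncard_le hUo hS (hSd.finite_inter_vanHove hA n)
      (hSd.finite_inter_kBoundary hA hUc n) hh
  rw [besSN_one_eq]
  calc θ U * upperDensity θ A S
      = limsup (fun n => θ U * (((S ∩ A n).ncard : ℝ≥0∞) / θ (A n))) atTop :=
        (ENNReal.limsup_const_mul_of_ne_top hUtop).symm
    _ ≤ limsup (fun n => (∫⁻ s in A n, ‖h s‖ₑ ∂θ) / θ (A n)
          + θ U * (((S ∩ kBoundary (closure U) (A n)).ncard : ℝ≥0∞) / θ (A n))) atTop :=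
        limsup_le_limsup (Eventually.of_forall hbound)
    _ = limsup (fun n => (∫⁻ s in A n, ‖h s‖ₑ ∂θ) / θ (A n)) atTop := by
        refine ENNReal.limsup_add_of_right_tendsto_zero ?_ _
        simpa using ENNReal.Tendsto.const_mul (hA.tendsto_ncard_inter_kBoundary hSd hUc)
          (Or.inr hUtop)

end Density

section DiracComb

variable {G : Type*} [AddCommGroup G] [TopologicalSpace G] [IsTopologicalAddGroup G]
  [MeasurableSpace G] [BorelSpace G] {Λ : Set G} {φ : G → ℂ}

theorem convM_diracComb_apply (hΛ : UnifDiscrete Λ) (hφ : IsCc φ) (s : G) :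
    convM (diracComb Λ) φ s = ∑' x, Λ.indicator (fun x => φ (s - x)) x := by
  have hcont : Continuous fun u => φ (s - u) := hφ.1.comp (continuous_const.sub continuous_id)
  have hfin := hΛ.hasFiniteSupport_indicator_sub hφ.2 s
  have hint : Integrable (fun u => φ (s - u)) (diracComb Λ) := by
    refine ⟨hcont.aestronglyMeasurable, ?_⟩
    rw [HasFiniteIntegral, diracComb, lintegral_sum_measure]
    simp_rw [lintegral_dirac' _ hcont.enorm.measurable]
    rw [tsum_subtype Λ fun x => ‖φ (s - x)‖ₑ, tsum_eq_sum (s := hfin.toFinset)]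
    · exact ENNReal.sum_lt_top.2 fun _ _ =>
        (Set.indicator_le_self _ _ _).trans_lt enorm_lt_top
    · intro x hx
      rw [← enorm_indicator_eq_indicator_enorm, enorm_eq_zero]
      simpa using hx
  rw [convM, diracComb, integral_sum_measure hint, ← tsum_subtype]
  exact tsum_congr fun x => integral_dirac' _ _ hcont.stronglyMeasurable

theorem convM_diracComb_eq_zero (hΛ : UnifDiscrete Λ) (hφ : IsCc φ) {s : G}
    (h : ∀ y ∈ Λ, φ (s - y) = 0) : convM (diracComb Λ) φ s = 0 := by
  rw [convM_diracComb_apply hΛ hφ]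
  exact (tsum_congr fun y => Set.indicator_apply_eq_zero.2 (h y)).trans tsum_zero

theorem convM_diracComb_add_eq (hΛ : UnifDiscrete Λ) (hφ : IsCc φ) {V : Set G}
    (hsep : IsSeparatedBy (V - V) Λ) (hsupp : ∀ z, φ z ≠ 0 → z ∈ V) {x w : G} (hx : x ∈ Λ)
    (hw : w ∈ V) : convM (diracComb Λ) φ (x + w) = φ w := by
  rw [convM_diracComb_apply hΛ hφ, tsum_eq_single (f := Λ.indicator fun y => φ (x + w - y)) x
    fun y hyx => Set.indicator_apply_eq_zero.2 fun hy => ?_, Set.indicator_of_mem hx,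
    add_sub_cancel_left]
  by_contra hne
  exact hyx (hsep x hx y hy ⟨x + w - y, hsupp _ hne, w, hw, by beta_reduce; abel⟩).symm

theorem enorm_convM_diracComb_sub_le (hΛ : UnifDiscrete Λ) (hφ : IsCc φ) (s t : G) :
    ‖convM (diracComb Λ) φ s - convM (diracComb Λ) φ (s - t)‖ₑ
      ≤ ∑' x, (Λ ∆ (t +ᵥ Λ)).indicator (fun x => ‖φ (s - x)‖ₑ) x := by
  have hshift : convM (diracComb Λ) φ (s - t)
      = ∑' x, (t +ᵥ Λ).indicator (fun x => φ (s - x)) x := by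
    rw [convM_diracComb_apply hΛ hφ,
      ← (Equiv.addLeft t).tsum_eq fun x => (t +ᵥ Λ).indicator (fun x => φ (s - x)) x]
    refine tsum_congr fun x => ?_
    show _ = (t +ᵥ Λ).indicator (fun x => φ (s - x)) (t + x)
    by_cases hx : x ∈ Λ
    · rw [Set.indicator_of_mem hx, Set.indicator_of_mem (Set.vadd_mem_vadd_set hx : t + x ∈ _),
        sub_add_eq_sub_sub]
    · rw [Set.indicator_of_notMem hx, Set.indicator_of_notMem
        (fun h => hx (Set.vadd_mem_vadd_set_iff.1 h) : t + x ∉ _)]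
  rw [convM_diracComb_apply hΛ hφ, hshift,
    ← (summable_of_hasFiniteSupport (hΛ.hasFiniteSupport_indicator_sub hφ.2 s)).tsum_sub
      (summable_of_hasFiniteSupport ((hΛ.vadd t).hasFiniteSupport_indicator_sub hφ.2 s))]
  refine enorm_tsum_le_tsum_enorm.trans (ENNReal.tsum_le_tsum fun x => ?_)
  by_cases h₁ : x ∈ Λ <;> by_cases h₂ : x ∈ t +ᵥ Λ <;> simp [h₁, h₂, Set.mem_symmDiff]

variable {θ : Measure G} [θ.IsAddHaarMeasure]

theorem lintegral_enorm_convM_diracComb_sub_le (hΛ : UnifDiscrete Λ) (hφ : IsCc φ) (t : G)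
    {B : Set G} (hB : IsCompact (closure B)) :
    ∫⁻ s in B, ‖convM (diracComb Λ) φ s - convM (diracComb Λ) φ (s - t)‖ₑ ∂θ
      ≤ ((Λ ∆ (t +ᵥ Λ)) ∩ (B + -tsupport φ)).ncard * ∫⁻ y, ‖φ y‖ₑ ∂θ := by
  set F := (Λ ∆ (t +ᵥ Λ)) ∩ (B + -tsupport φ)
  have hF : F.Finite := (hΛ.finite_inter_symmDiff_vadd t (hB.add hφ.2.isCompact.neg)).subset
    (Set.inter_subset_inter_right _ (Set.add_subset_add_right subset_closure))
  have hmeas : ∀ x, Measurable fun s => ‖φ (s - x)‖ₑ := fun x =>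
    (hφ.1.comp (continuous_id.sub continuous_const)).enorm.measurable
  have hpt : ∀ s ∈ B, ‖convM (diracComb Λ) φ s - convM (diracComb Λ) φ (s - t)‖ₑ
      ≤ ∑ x ∈ hF.toFinset, ‖φ (s - x)‖ₑ := fun s hs => by
    refine (enorm_convM_diracComb_sub_le hΛ hφ s t).trans ?_
    rw [tsum_eq_sum (s := hF.toFinset)]
    · exact Finset.sum_le_sum fun x _ => Set.indicator_le_self _ _ x
    · refine fun x hx => Set.indicator_apply_eq_zero.2 fun hxD => enorm_eq_zero.2 ?_
      by_contra hne
      exact hx (hF.mem_toFinset.2 ⟨hxD, s, hs, -(s - x),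
        Set.neg_mem_neg.2 (subset_tsupport φ hne), by beta_reduce; abel⟩)
  calc ∫⁻ s in B, ‖convM (diracComb Λ) φ s - convM (diracComb Λ) φ (s - t)‖ₑ ∂θ
      ≤ ∫⁻ s in B, ∑ x ∈ hF.toFinset, ‖φ (s - x)‖ₑ ∂θ :=
        setLIntegral_mono (Finset.measurable_sum _ fun x _ => hmeas x) hpt
    _ ≤ ∫⁻ s, ∑ x ∈ hF.toFinset, ‖φ (s - x)‖ₑ ∂θ := setLIntegral_le_lintegral _ _
    _ = F.ncard * ∫⁻ y, ‖φ y‖ₑ ∂θ := by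
        rw [lintegral_finsetSum _ fun x _ => hmeas x]
        simp_rw [lintegral_sub_right_eq_self (fun y => ‖φ y‖ₑ)]
        rw [Finset.sum_const, nsmul_eq_mul, Set.ncard_eq_toFinset_card F hF]

variable [LocallyCompactSpace G] {A : ℕ → Set G}

theorem IsVanHove.besSN_convM_diracComb_sub_le (hA : IsVanHove θ A) (hΛ : UnifDiscrete Λ)
    (hφ : IsCc φ) (t : G) :
    besSN θ A 1 (fun s => convM (diracComb Λ) φ s - convM (diracComb Λ) φ (s - t))
      ≤ (∫⁻ y, ‖φ y‖ₑ ∂θ) * upperDensity θ A (Λ ∆ (t +ᵥ Λ)) := by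
  set D := Λ ∆ (t +ᵥ Λ)
  set K := -tsupport φ
  set C := ∫⁻ y, ‖φ y‖ₑ ∂θ
  have hK : IsCompact K := hφ.2.isCompact.neg
  have hC : C ≠ ⊤ := (hφ.1.integrable_of_hasCompactSupport hφ.2).2.ne
  have hfinA : ∀ n, (D ∩ A n).Finite := fun n =>
    (hΛ.finite_inter_symmDiff_vadd t (hA.relCompact n)).subset
      (Set.inter_subset_inter_right D subset_closure)
  have hfinK : ∀ n, (D ∩ kBoundary K (A n)).Finite := fun n => by
    obtain ⟨C', hC', hsub⟩ := isCompact_kBoundary_subset (hA.relCompact n) hK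
    exact (hΛ.finite_inter_symmDiff_vadd t hC').subset (Set.inter_subset_inter_right D hsub)
  have hbound : ∀ n, (∫⁻ s in A n,
        ‖convM (diracComb Λ) φ s - convM (diracComb Λ) φ (s - t)‖ₑ ∂θ) / θ (A n)
      ≤ C * ((D ∩ A n).ncard / θ (A n)) + C * ((D ∩ kBoundary K (A n)).ncard / θ (A n)) :=
    fun n => by
    have hcard : (D ∩ (A n + K)).ncard ≤ (D ∩ A n).ncard + (D ∩ kBoundary K (A n)).ncard :=
      (Set.ncard_le_ncard (Set.inter_union_distrib_left D _ _ ▸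
        Set.inter_subset_inter_right D (add_subset_union_kBoundary _ _))
        ((hfinA n).union (hfinK n))).trans (Set.ncard_union_le _ _)
    simp only [← mul_div_assoc, ← ENNReal.add_div, ← mul_add]
    refine ENNReal.div_le_div_right ((lintegral_enorm_convM_diracComb_sub_le hΛ hφ t
      (hA.relCompact n)).trans ?_) _
    rw [mul_comm]
    gcongr
    exact_mod_cast hcard
  rw [besSN_one_eq]
  calc limsup (fun n => (∫⁻ s in A n,
        ‖convM (diracComb Λ) φ s - convM (diracComb Λ) φ (s - t)‖ₑ ∂θ) / θ (A n)) atTop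
      ≤ limsup (fun n => C * ((D ∩ A n).ncard / θ (A n))
          + C * ((D ∩ kBoundary K (A n)).ncard / θ (A n))) atTop :=
        limsup_le_limsup (Eventually.of_forall hbound)
    _ = limsup (fun n => C * ((D ∩ A n).ncard / θ (A n))) atTop :=
        ENNReal.limsup_add_of_right_tendsto_zero (by
          simpa using ENNReal.Tendsto.const_mul
            (hA.tendsto_ncard_symmDiff_inter_kBoundary hΛ t hK) (Or.inr hC)) _
    _ = C * upperDensity θ A D := ENNReal.limsup_const_mul_of_ne_top hC

theorem IsVanHove.meanAP_convM_diracComb (hA : IsVanHove θ A) (hΛ : UnifDiscrete Λ)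
    (H : ∀ ε : ℝ, 0 < ε →
      RelDense {t : G | upperDensity θ A (Λ ∆ (t +ᵥ Λ)) < ENNReal.ofReal ε})
    (hφ : IsCc φ) : MeanAP θ A (convM (diracComb Λ) φ) := by
  intro ε hε
  obtain ⟨δ, hδ, hδε⟩ :=
    ENNReal.exists_mul_ofReal_lt (hφ.1.integrable_of_hasCompactSupport hφ.2 (μ := θ)).2.ne hε
  exact (H δ hδ).mono fun t ht => (hA.besSN_convM_diracComb_sub_le hΛ hφ t).trans_lt
    (lt_of_le_of_lt (by gcongr; exact ht.le) hδε)

theorem IsVanHove.measure_mul_upperDensity_symmDiff_le (hA : IsVanHove θ A) {U V : Set G}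
    {t t' : G} (hUo : IsOpen U) (hU0 : (0 : G) ∈ U) (hUc : IsCompact (closure U)) (hUV : U ⊆ V)
    (hsep : IsSeparatedBy (V - V) Λ) (hφ : IsCc φ) (hsupp : ∀ z, φ z ≠ 0 → z ∈ V)
    (hone : ∀ z ∈ U, φ z = 1) (hnear : ∀ d ∈ Λ - Λ, t - d ∈ V - V → d = t') :
    θ U * upperDensity θ A (Λ ∆ (t' +ᵥ Λ))
      ≤ 2 * besSN θ A 1 (fun s => convM (diracComb Λ) φ s - convM (diracComb Λ) φ (s - t)) := by
  set f := convM (diracComb Λ) φ with hf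
  set M := besSN θ A 1 fun s => f s - f (s - t)
  have hUU : U - U ⊆ V - V := Set.sub_subset_sub hUV hUV
  have hΛ : UnifDiscrete Λ := unifDiscrete_iff.2 ⟨U, hUo, hU0, hsep.mono hUU subset_rfl⟩
  have hf_one : ∀ x ∈ Λ, ∀ w ∈ U, f (x + w) = 1 := fun x hx w hw => by
    rw [hf, convM_diracComb_add_eq hΛ hφ hsep hsupp hx (hUV hw), hone w hw]
  have hf_zero : ∀ s, (∀ y ∈ Λ, s - y ∉ V) → f s = 0 := fun s h =>
    convM_diracComb_eq_zero hΛ hφ fun y hy => by_contra fun hne => h y hy (hsupp _ hne)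
  have h₁ : θ U * upperDensity θ A (Λ \ (t' +ᵥ Λ)) ≤ M := by
    refine hA.measure_mul_upperDensity_le_besSN hUo hU0 hUc
      (hsep.mono hUU Set.sdiff_subset) fun x hx w hw => ?_
    rw [hf_one x hx.1 w hw, hf_zero _ fun y hy hyV => hx.2 ⟨y, hy, ?_⟩]
    · simp
    have ht' := hnear (x - y) (Set.sub_mem_sub hx.1 hy)
      ⟨w, hUV hw, x + w - t - y, hyV, by beta_reduce; abel⟩
    show t' + y = x
    rw [← ht', sub_add_cancel]
  have h₂ : θ U * upperDensity θ A ((t' +ᵥ Λ) \ Λ) ≤ M := by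
    rw [← hA.upperDensity_vadd ((hΛ.vadd t').mono Set.sdiff_subset) (t - t')]
    refine hA.measure_mul_upperDensity_le_besSN hUo hU0 hUc ((hsep.vadd t).mono hUU ?_) ?_
    · rintro _ ⟨_, ⟨⟨y, hy, rfl⟩, -⟩, rfl⟩
      exact ⟨y, hy, by simp only [vadd_eq_add]; abel⟩
    · rintro _ ⟨_, ⟨⟨y, hy, rfl⟩, hy'⟩, rfl⟩ w hw
      simp only [vadd_eq_add] at hy' ⊢
      rw [show t - t' + (t' + y) + w = t + y + w by abel, add_assoc, add_sub_cancel_left,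
        hf_one y hy w hw, hf_zero _ fun x hx hxV => hy' ?_]
      · simp
      have ht' := hnear (x - y) (Set.sub_mem_sub hx hy)
        ⟨t + (y + w) - x, hxV, w, hUV hw, by beta_reduce; abel⟩
      rwa [← ht', sub_add_cancel]
  calc θ U * upperDensity θ A (Λ ∆ (t' +ᵥ Λ))
      ≤ θ U * (upperDensity θ A (Λ \ (t' +ᵥ Λ)) + upperDensity θ A ((t' +ᵥ Λ) \ Λ)) := by
        rw [Set.symmDiff_def]
        gcongr
        exact upperDensity_union_le _ _
    _ ≤ M + M := by rw [mul_add]; exact add_le_add h₁ h₂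
    _ = 2 * M := (two_mul M).symm

theorem IsVanHove.relDense_upperDensity_symmDiff_lt (hA : IsVanHove θ A)
    (hMeyer : UnifDiscrete (Λ - Λ - Λ))
    (H : ∀ φ : G → ℂ, IsCc φ → MeanAP θ A (convM (diracComb Λ) φ)) {ε : ℝ} (hε : 0 < ε) :
    RelDense {t : G | upperDensity θ A (Λ ∆ (t +ᵥ Λ)) < ENNReal.ofReal ε} := by
  obtain ⟨O, hOo, hO0, hsepO⟩ := unifDiscrete_iff.1 hMeyer
  obtain ⟨V, hVo, hV0, hVc, hVO⟩ :=
    exists_sub_sub_sub_subset (hOo.sub_left.mem_nhds ⟨0, hO0, 0, hO0, sub_zero 0⟩)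
  have h0 : (0 : G) ∈ V - V := ⟨0, hV0, 0, hV0, sub_zero 0⟩
  have hsepD : IsSeparatedBy ((V - V) - (V - V)) (Λ - Λ) :=
    hsepO.sub_of_sub_sub.mono hVO subset_rfl
  have hsep : IsSeparatedBy (V - V) Λ :=
    (hsepD.mono (fun z hz => ⟨z, hz, 0, h0, sub_zero z⟩) subset_rfl).of_sub
  obtain ⟨φ, U, hφ, hsupp, hUo, hU0, hUV, hone⟩ := exists_isCc_eq_one_near_zero hVo hV0 hVc
  have hUc : IsCompact (closure U) := hVc.closure_of_subset (hUV.trans subset_closure)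
  have hUpos : θ U ≠ 0 := (hUo.measure_pos θ ⟨0, hU0⟩).ne'
  have hUtop : θ U ≠ ⊤ := ((measure_mono subset_closure).trans_lt hUc.measure_lt_top).ne
  obtain ⟨δ, hδ, hδε⟩ := ENNReal.exists_mul_ofReal_lt
    (ENNReal.mul_ne_top (ENNReal.inv_ne_top.2 hUpos) (ENNReal.ofNat_ne_top (n := 2))) hε
  refine (H φ hφ δ hδ).of_forall_exists_sub_mem (N := closure V - closure V)
    (by rw [sub_eq_add_neg]; exact hVc.add hVc.neg) fun t ht => ?_
  obtain ⟨t', htt', hnear⟩ := hsepD.exists_unique_near h0 t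
  refine ⟨t', ?_, Set.sub_subset_sub subset_closure subset_closure htt'⟩
  calc upperDensity θ A (Λ ∆ (t' +ᵥ Λ))
      = (θ U)⁻¹ * (θ U * upperDensity θ A (Λ ∆ (t' +ᵥ Λ))) :=
        (ENNReal.inv_mul_cancel_left hUpos hUtop).symm
    _ ≤ (θ U)⁻¹ * (2 * ENNReal.ofReal δ) := mul_le_mul_right
        ((hA.measure_mul_upperDensity_symmDiff_le hUo hU0 hUc hUV hsep hφ hsupp hone
          hnear).trans (by gcongr; exact ht.le)) _
    _ < ENNReal.ofReal ε := by rwa [← mul_assoc]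

end DiracComb

end MAP

theorem statement7_general
    {G : Type*} [AddCommGroup G] [TopologicalSpace G] [IsTopologicalAddGroup G]
    [LocallyCompactSpace G]
    [MeasurableSpace G] [BorelSpace G]
    (θ : Measure G) [θ.IsAddHaarMeasure]
    (A : ℕ → Set G) (hA : IsVanHove θ A)
    (Λ : Set G) (hMeyer : UnifDiscrete (Λ - Λ - Λ)) :
    (∀ φ : G → ℂ, IsCc φ → MeanAP θ A (convM (diracComb Λ) φ)) ↔
      ∀ ε : ℝ, 0 < ε →
        RelDense {t : G |
          limsup (fun n =>
            ((Nat.card ↥(((Λ \ (t +ᵥ Λ)) ∪ ((t +ᵥ Λ) \ Λ)) ∩ A n)) : ℝ≥0∞)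
              / θ (A n)) atTop < ENNReal.ofReal ε} := by
  simp only [Nat.card_coe_set_eq]
  exact ⟨fun H ε hε => hA.relDense_upperDensity_symmDiff_lt hMeyer H hε,
    fun H φ hφ => hA.meanAP_convM_diracComb hMeyer.of_sub_sub H hφ⟩

theorem statement7
    {G : Type*} [AddCommGroup G] [TopologicalSpace G] [IsTopologicalAddGroup G]
    [LocallyCompactSpace G] [SigmaCompactSpace G] [T2Space G]
    [MeasurableSpace G] [BorelSpace G]
    (θ : Measure G) [θ.IsAddHaarMeasure]
    (A : ℕ → Set G) (hA : IsVanHove θ A)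
    (Λ : Set G) (hΛ : IsDelone Λ) (hMeyer : UnifDiscrete (Λ - Λ - Λ)) :
    (∀ φ : G → ℂ, IsCc φ → MeanAP θ A (convM (diracComb Λ) φ)) ↔
      ∀ ε : ℝ, 0 < ε →
        RelDense {t : G |
          limsup (fun n =>
            ((Nat.card ↥(((Λ \ (t +ᵥ Λ)) ∪ ((t +ᵥ Λ) \ Λ)) ∩ A n)) : ℝ≥0∞)
              / θ (A n)) atTop < ENNReal.ofReal ε} :=
  statement7_general θ A hA Λ hMeyer
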